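/- For the unit n-cube Cₙ = [0,1]ⁿ with vertex set V (the 2ⁿ points with coordinates in {0,1}), the rule L(f) = (2/3)f(1/2,…,1/2) + (1/(3·2ⁿ))·Σ_{P∈V} f(P) satisfies L(f) = ∫_{Cₙ} f dV for every polynomial f of total degree ≤ 3. -/

import Mathlib

open MeasureTheory MvPolynomial

/-- The unit n-cube [0,1]ⁿ. -/
def Cube (n : ℕ) : Set (Fin n → ℝ) := {v | ∀ i, v i ∈ Set.Icc (0:ℝ) 1}

/-- The vertex of the n-cube corresponding to a subset of coordinates, encoded
by a boolean vector. -/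
def cubeVertex (n : ℕ) (s : Fin n → Bool) : Fin n → ℝ :=
  fun i => if s i then 1 else 0

/-!
Both sides are linear in `p`, so it suffices to treat a monomial `∏ xᵢ ^ dᵢ` with `∑ dᵢ ≤ 3`.
The integral, the value at the centre and the vertex average all factor over the coordinates,
with one-dimensional factors `1 / (k + 1)`, `(1/2)^k` and `(1^k + 0^k) / 2`. For `k ≤ 3` the first
is `2/3` times the second plus `1/3` times the third, and the last two agree for `k ≤ 1`. Since
at most one exponent exceeds `1`, the convex combination of the two products is the product of
the convex combinations.
-/

open Finset

theorem Finset.prod_mul_add_mul_of_subsingleton {ι R : Type*} [CommSemiring R] (s : Finset ι)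
    {x y : ι → R} {a b : R} (hab : a + b = 1) (h : {i | i ∈ s ∧ x i ≠ y i}.Subsingleton) :
    ∏ i ∈ s, (a * x i + b * y i) = a * ∏ i ∈ s, x i + b * ∏ i ∈ s, y i := by
  classical
  have hcomb : ∀ i, y i = x i → a * x i + b * y i = x i := fun i hi => by
    rw [hi, ← add_mul, hab, one_mul]
  rcases h.eq_empty_or_singleton with hempty | ⟨j, hj⟩
  · have hxy : ∀ i ∈ s, y i = x i := fun i hi => by
      by_contra hne
      exact hempty.subset ⟨hi, Ne.symm hne⟩
    rw [prod_congr rfl fun i hi => hcomb i (hxy i hi), prod_congr rfl hxy, ← add_mul, hab,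
      one_mul]
  · have hmem : ∀ i, i ∈ s ∧ x i ≠ y i ↔ i = j := Set.ext_iff.mp hj
    have hjs : j ∈ s ∧ x j ≠ y j := (hmem j).mpr rfl
    have hxy : ∀ i ∈ s.erase j, y i = x i := fun i hi => by
      by_contra hne
      exact (mem_erase.mp hi).1 ((hmem i).mp ⟨(mem_erase.mp hi).2, Ne.symm hne⟩)
    rw [← mul_prod_erase s _ hjs.1, ← mul_prod_erase s x hjs.1, ← mul_prod_erase s y hjs.1,
      prod_congr rfl fun i hi => hcomb i (hxy i hi), prod_congr rfl hxy]
    ring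

theorem subsingleton_one_lt_of_sum_le_three {ι : Type*} [Fintype ι] {d : ι → ℕ}
    (hd : ∑ i, d i ≤ 3) : {i | 1 < d i}.Subsingleton := by
  intro i hi j hj
  by_contra hij
  have := add_le_sum (fun k _ => Nat.zero_le (d k)) (mem_univ i) (mem_univ j) hij
  simp only [Set.mem_ofPred_eq] at hi hj
  omega

theorem one_div_succ_eq_of_le_three {k : ℕ} (hk : k ≤ 3) :
    1 / ((k : ℝ) + 1) = 2 / 3 * (1 / 2) ^ k + 1 / 3 * ((1 ^ k + 0 ^ k) / 2) := by
  interval_cases k <;> norm_num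

theorem half_pow_eq_of_le_one {k : ℕ} (hk : k ≤ 1) : (1 / 2 : ℝ) ^ k = (1 ^ k + 0 ^ k) / 2 := by
  interval_cases k <;> norm_num

theorem prod_one_div_succ_eq_of_sum_le_three {ι : Type*} [Fintype ι] {d : ι → ℕ}
    (hd : ∑ i, d i ≤ 3) :
    ∏ i, 1 / ((d i : ℝ) + 1)
      = 2 / 3 * ∏ i, (1 / 2 : ℝ) ^ d i + 1 / 3 * ∏ i, ((1 : ℝ) ^ d i + 0 ^ d i) / 2 := by
  rw [← prod_mul_add_mul_of_subsingleton _ (by norm_num)]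
  · refine prod_congr rfl fun i _ => one_div_succ_eq_of_le_three ?_
    exact (single_le_sum (fun k _ => Nat.zero_le (d k)) (mem_univ i)).trans hd
  · refine (subsingleton_one_lt_of_sum_le_three hd).anti fun i hi => ?_
    by_contra hle
    exact hi.2 (half_pow_eq_of_le_one (not_lt.mp hle))

theorem cube_eq_pi (n : ℕ) : Cube n = Set.univ.pi fun _ => Set.Icc (0 : ℝ) 1 := by
  ext v
  simp only [Cube, Set.mem_ofPred_eq, Set.mem_univ_pi]

theorem isCompact_cube (n : ℕ) : IsCompact (Cube n) := by
  rw [cube_eq_pi]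
  exact isCompact_univ_pi fun _ => isCompact_Icc

theorem integral_Icc_pow (k : ℕ) : ∫ x in Set.Icc (0 : ℝ) 1, x ^ k = 1 / ((k : ℝ) + 1) := by
  rw [integral_Icc_eq_integral_Ioc, ← intervalIntegral.integral_of_le zero_le_one, integral_pow]
  simp

theorem integral_cube_prod_pow {n : ℕ} (d : Fin n → ℕ) :
    ∫ v in Cube n, ∏ i, v i ^ d i = ∏ i, 1 / ((d i : ℝ) + 1) := by
  rw [cube_eq_pi, volume_pi, Measure.restrict_pi_pi,
    integral_fintype_prod_eq_prod fun i x => x ^ d i]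
  exact prod_congr rfl fun i _ => integral_Icc_pow (d i)

theorem sum_cubeVertex_prod_pow {n : ℕ} (d : Fin n → ℕ) :
    ∑ s, ∏ i, cubeVertex n s i ^ d i = ∏ i, ((1 : ℝ) ^ d i + 0 ^ d i) := by
  unfold cubeVertex
  rw [← Fintype.prod_sum fun i (b : Bool) => (if b then (1 : ℝ) else 0) ^ d i]
  simp only [Fintype.sum_bool, if_true, Bool.false_eq_true, if_false]

theorem cubature_prod_pow_eq_integral_cube {n : ℕ} {d : Fin n → ℕ} (hd : ∑ i, d i ≤ 3) :
    2 / 3 * ∏ i, (1 / 2 : ℝ) ^ d i + 1 / (3 * 2 ^ n) * ∑ s, ∏ i, cubeVertex n s i ^ d i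
      = ∫ v in Cube n, ∏ i, v i ^ d i := by
  rw [integral_cube_prod_pow, prod_one_div_succ_eq_of_sum_le_three hd, sum_cubeVertex_prod_pow,
    prod_div_distrib, prod_const, card_univ, Fintype.card_fin]
  ring

theorem stmt_13 (n : ℕ) (p : MvPolynomial (Fin n) ℝ) (hp : p.totalDegree ≤ 3) :
    (2/3 : ℝ) * eval (fun _ => (1/2 : ℝ)) p
      + (1 / (3 * 2^n : ℝ)) * ∑ s : Fin n → Bool, eval (cubeVertex n s) p
      = ∫ v in Cube n, eval v p := by
  have hdeg : ∀ d ∈ p.support, ∑ i, d i ≤ 3 := fun d hd => by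
    have := (le_totalDegree hd).trans hp
    rwa [Finsupp.sum_fintype d (fun _ e => e) fun _ => rfl] at this
  have hint : ∀ d : Fin n →₀ ℕ, IntegrableOn (fun v => coeff d p * ∏ i, v i ^ d i) (Cube n) :=
    fun d => ContinuousOn.integrableOn_compact (isCompact_cube n) (by fun_prop)
  simp only [eval_eq']
  rw [integral_finsetSum _ fun d _ => hint d, sum_comm, mul_sum, mul_sum, ← sum_add_distrib]
  refine sum_congr rfl fun d hd => ?_
  rw [← mul_sum, integral_const_mul, ← cubature_prod_pow_eq_integral_cube (hdeg d hd)]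
  ring
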